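/- Let R be a PID that is not a field with infinitely many primes. Then the Macías space M(R) = (R∖{0}, τ) is not compact: the open cover {σ_p ∖ {0} : p prime} has no finite subcover. -/

import Mathlib

/-!
A nonzero element of a UFD has only finitely many prime divisors up to associates, so it is
coprime to one of the infinitely many primes `f n`: the sets `σ_{f n}` cover `M(R)`. No finite
subfamily does, since the product of its primes lies in none of its members.
-/

def sigmaSet {R : Type*} [CommRing R] (r : R) : Set R :=
  {s | Ideal.span {r} ⊔ Ideal.span {s} = ⊤}

theorem mem_sigmaSet_iff_isCoprime {R : Type*} [CommRing R] {k s : R} :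
    s ∈ sigmaSet k ↔ IsCoprime k s := by
  rw [sigmaSet, Set.mem_ofPred_eq, ← Ideal.isCoprime_iff_sup_eq,
    Ideal.isCoprime_span_singleton_iff]

theorem UniqueFactorizationMonoid.exists_not_dvd_of_pairwise_not_associated
    {α ι : Type*} [CommMonoidWithZero α] [UniqueFactorizationMonoid α] [Infinite ι]
    {f : ι → α} (hf : ∀ i, Irreducible (f i))
    (hna : Pairwise fun i j => ¬ Associated (f i) (f j)) {x : α} (hx : x ≠ 0) :
    ∃ i, ¬ f i ∣ x := by
  by_contra! hdvd
  choose g hg hassoc using fun i => exists_mem_factors_of_dvd hx (hf i) (hdvd i)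
  have hg_inj : Function.Injective g := fun i j hij => by
    by_contra hne
    exact hna hne ((hassoc i).trans (hij ▸ (hassoc j).symm))
  exact Set.infinite_of_injective_forall_mem (s := {y | y ∈ factors x}) hg_inj hg
    (factors x).finite_toSet

theorem exists_mem_sigmaSet_of_pairwise_not_associated {R ι : Type*} [CommRing R] [IsDomain R]
    [IsPrincipalIdealRing R] [Infinite ι] {f : ι → R} (hf : ∀ i, Prime (f i))
    (hna : Pairwise fun i j => ¬ Associated (f i) (f j)) {x : R} (hx : x ≠ 0) :
    ∃ i, x ∈ sigmaSet (f i) := by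
  obtain ⟨i, hi⟩ := UniqueFactorizationMonoid.exists_not_dvd_of_pairwise_not_associated
    (fun i => (hf i).irreducible) hna hx
  exact ⟨i, mem_sigmaSet_iff_isCoprime.mpr ((hf i).coprime_iff_not_dvd.mpr hi)⟩

theorem prod_notMem_sigmaSet {R ι : Type*} [CommRing R] {f : ι → R} (t : Finset ι) {i : ι}
    (hi : i ∈ t) (hf : ¬ IsUnit (f i)) : ∏ j ∈ t, f j ∉ sigmaSet (f i) := fun hmem =>
  hf ((mem_sigmaSet_iff_isCoprime.mp hmem).isUnit_of_dvd' dvd_rfl (Finset.dvd_prod_of_mem f hi))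

theorem not_compactSpace_of_isOpen_sigmaSet {R : Type*} [CommRing R] [IsDomain R]
    [IsPrincipalIdealRing R] {_ : TopologicalSpace {x : R // x ≠ 0}} {ι : Type*} [Infinite ι]
    {f : ι → R} (hf : ∀ i, Prime (f i)) (hna : Pairwise fun i j => ¬ Associated (f i) (f j))
    (hopen : ∀ i, IsOpen {x : {r : R // r ≠ 0} | (x : R) ∈ sigmaSet (f i)}) :
    ¬ CompactSpace {x : R // x ≠ 0} := by
  intro _
  have hcover : Set.univ ⊆ ⋃ i, {x : {r : R // r ≠ 0} | (x : R) ∈ sigmaSet (f i)} := fun x _ =>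
    Set.mem_iUnion.mpr (exists_mem_sigmaSet_of_pairwise_not_associated hf hna x.2)
  obtain ⟨t, ht⟩ := isCompact_univ.elim_finite_subcover _ hopen hcover
  have hprod : ∏ i ∈ t, f i ≠ 0 := Finset.prod_ne_zero_iff.mpr fun i _ => (hf i).ne_zero
  obtain ⟨i, hi, hmem⟩ := Set.mem_iUnion₂.mp (ht (Set.mem_univ ⟨_, hprod⟩))
  exact prod_notMem_sigmaSet t hi (hf i).not_isUnit hmem

theorem macias_not_compact_general (R : Type*) [CommRing R] [IsDomain R]
    [IsPrincipalIdealRing R]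
    (f : ℕ → R) (hp : ∀ n, Prime (f n))
    (hna : ∀ m n, m ≠ n → ¬ Associated (f m) (f n)) :
    letI : TopologicalSpace {x : R // x ≠ 0} :=
      TopologicalSpace.generateFrom
        {S : Set {x : R // x ≠ 0} | ∃ k : R, k ≠ 0 ∧
          S = {x : {r : R // r ≠ 0} | (x : R) ∈ sigmaSet k}}
    ¬ CompactSpace {x : R // x ≠ 0} :=
  not_compactSpace_of_isOpen_sigmaSet hp hna fun n =>
    TopologicalSpace.GenerateOpen.basic _ ⟨f n, (hp n).ne_zero, rfl⟩

/-- A PID that is not a field with infinitely many pairwise non-associated primes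
has non-compact Macías space M(R) = R∖{0}. -/
theorem macias_not_compact (R : Type*) [CommRing R] [IsDomain R]
    [IsPrincipalIdealRing R] (hf : ¬ IsField R)
    (f : ℕ → R) (hp : ∀ n, Prime (f n))
    (hna : ∀ m n, m ≠ n → ¬ Associated (f m) (f n)) :
    letI : TopologicalSpace {x : R // x ≠ 0} :=
      TopologicalSpace.generateFrom
        {S : Set {x : R // x ≠ 0} | ∃ k : R, k ≠ 0 ∧
          S = {x : {r : R // r ≠ 0} | (x : R) ∈ sigmaSet k}}
    ¬ CompactSpace {x : R // x ≠ 0} :=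
  macias_not_compact_general R f hp hna
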